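/- arXiv:2511.05198 — 3 statements merged into one kernel-verified Lean document; each statement's English description precedes it below -/
import Mathlib

section
/- Let L be a totally real number field (i.e., the image of every ring embedding L → ℂ lies in ℝ) and let χ be an algebraic Hecke character of L modulo a nonzero ideal 𝔣 with infinity type μ ∈ ℤ^{J_L}. Then μ is constant: there is an integer k with μ(σ) = k for every embedding σ ∈ J_L. -/
open NumberField FractionalIdeal
open scoped nonZeroDivisors

variable (L : Type*) [Field L] [NumberField L]

/-- The group `I(𝔣)` of fractional ideals of `L` coprime to `𝔣`: the subgroup of invertible
fractional ideals generated by the integral ideals coprime to `𝔣`. -/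
noncomputable def idealsCoprimeTo (𝔣 : Ideal (𝓞 L)) :
    Subgroup (FractionalIdeal (𝓞 L)⁰ L)ˣ :=
  Subgroup.closure
    {I : (FractionalIdeal (𝓞 L)⁰ L)ˣ |
      ∃ a : Ideal (𝓞 L), IsCoprime a 𝔣 ∧ (I : FractionalIdeal (𝓞 L)⁰ L) = a}

/-- `ξ ≡ 1 (mod^× 𝔣)`: `ξ` is a quotient `a/b` of elements of `𝒪_L` that are both
congruent to `1` modulo `𝔣`. -/
def MulCongruentOne (𝔣 : Ideal (𝓞 L)) (ξ : L) : Prop :=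
  ∃ a b : 𝓞 L, a - 1 ∈ 𝔣 ∧ b - 1 ∈ 𝔣 ∧ algebraMap (𝓞 L) L b ≠ 0 ∧
    ξ = algebraMap (𝓞 L) L a / algebraMap (𝓞 L) L b

/-- `χ : I(𝔣) → ℂ^×` is an algebraic Hecke character modulo `𝔣` with infinity type
`μ ∈ ℤ^{J_L}` if for every principal fractional ideal `(ξ)` with `ξ ≡ 1 (mod^× 𝔣)` and
`σ(ξ) > 0` for all real embeddings `σ`, one has `χ((ξ)) = ∏_σ σ(ξ)^{μ(σ)}`. -/
def IsAlgebraicHeckeCharacter (𝔣 : Ideal (𝓞 L)) (μ : (L →+* ℂ) → ℤ)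
    (χ : idealsCoprimeTo L 𝔣 →* ℂˣ) : Prop :=
  ∀ (ξ : Lˣ) (h : toPrincipalIdeal (𝓞 L) L ξ ∈ idealsCoprimeTo L 𝔣),
    MulCongruentOne L 𝔣 (ξ : L) →
    (∀ σ : L →+* ℂ, ComplexEmbedding.IsReal σ → 0 < (σ (ξ : L)).re) →
    (χ ⟨_, h⟩ : ℂ) = ∏ σ : L →+* ℂ, σ (ξ : L) ^ μ σ

/-! If `u` is a unit of `𝒪_L`, some power `u ^ (2n)` is `≡ 1 (mod 𝔣)`, totally positive and
generates the unit ideal, so the character condition gives `∏_σ σ(u) ^ (2n μ(σ)) = 1`, i.e.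
`∑_σ μ(σ) log |σ(u)| = 0`. By Dirichlet's unit theorem the logarithmic embedding of the units
spans the hyperplane `∑_w mult(w) x_w = 0`, so the only linear relations among the `log |u|_w`
are multiples of the product formula: the sum of `μ` over the embeddings above each place `w` is
proportional to `mult(w)`. Over a totally real field each place has exactly one embedding, of
multiplicity one, hence `μ` is constant. -/

theorem Ideal.exists_pow_sub_one_mem {R : Type*} [CommRing R] (I : Ideal R) [Finite (R ⧸ I)]
    (u : Rˣ) : ∃ n, 0 < n ∧ (u : R) ^ n - 1 ∈ I := by
  obtain ⟨n, hn, hu⟩ :=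
    (isOfFinOrder_of_finite (Units.map (Ideal.Quotient.mk I : R →* R ⧸ I) u)).exists_pow_eq_one
  refine ⟨n, hn, Ideal.Quotient.eq.mp ?_⟩
  simpa using congrArg Units.val hu

theorem NumberField.ComplexEmbedding.IsReal.re_pow_two_pos {K : Type*} [Field K] {φ : K →+* ℂ}
    (hφ : ComplexEmbedding.IsReal φ) {x : K} (hx : x ≠ 0) : 0 < (φ (x ^ 2)).re := by
  rw [map_pow, ← hφ.coe_embedding_apply, ← Complex.ofReal_pow, Complex.ofReal_re]
  exact pow_two_pos_of_ne_zero ((_root_.map_ne_zero _).mpr hx)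

theorem sum_mul_log_norm_eq_zero_of_prod_zpow_eq_one {ι : Type*} [Fintype ι] {z : ι → ℂ}
    (hz : ∀ i, z i ≠ 0) {e : ι → ℤ} (h : ∏ i, z i ^ e i = 1) :
    ∑ i, (e i : ℝ) * Real.log ‖z i‖ = 0 := by
  have := congrArg (fun w => Real.log ‖w‖) h
  simp only [norm_prod, norm_zpow, norm_one, Real.log_one] at this
  rw [Real.log_prod (fun i _ => zpow_ne_zero _ (norm_ne_zero_iff.mpr (hz i)))] at this
  simpa only [Real.log_zpow] using this

namespace NumberField

open InfinitePlace

open scoped Classical in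
theorem InfinitePlace.sum_mul_log_norm_eq_sum_fiber {K : Type*} [Field K] [NumberField K]
    (f : (K →+* ℂ) → ℝ) (x : K) :
    ∑ φ : K →+* ℂ, f φ * Real.log ‖φ x‖ =
      ∑ w : InfinitePlace K, (∑ φ with mk φ = w, f φ) * Real.log (w x) := by
  rw [← Finset.sum_fiberwise Finset.univ mk]
  refine Finset.sum_congr rfl fun w _ => ?_
  rw [Finset.sum_mul]
  refine Finset.sum_congr rfl fun φ hφ => ?_
  obtain rfl := (Finset.mem_filter.mp hφ).2
  rfl

open scoped Classical in
theorem InfinitePlace.filter_mk_eq_singleton_of_isReal {K : Type*} [Field K] [NumberField K]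
    {φ : K →+* ℂ} (hφ : ComplexEmbedding.IsReal φ) : ({ψ | mk ψ = mk φ} : Finset _) = {φ} := by
  obtain ⟨ψ, hψ⟩ := Finset.card_eq_one.mp
    ((card_filter_mk_eq (mk φ)).trans (isReal_mk_iff.mpr hφ).mult_eq_one)
  have hφψ : φ ∈ ({ψ | mk ψ = mk φ} : Finset _) := by simp
  rw [hψ, Finset.mem_singleton] at hφψ
  rw [hψ, hφψ]

open NumberField.Units NumberField.Units.dirichletUnitTheorem in
theorem Units.exists_eq_mul_mult_of_sum_mul_log_eq_zero {K : Type*} [Field K] [NumberField K]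
    {c : InfinitePlace K → ℝ} (hc : ∀ u : (𝓞 K)ˣ, ∑ w, c w * Real.log (w u) = 0) :
    ∃ k : ℝ, ∀ w, c w = k * w.mult := by
  classical
  set k := c w₀ / (w₀ : InfinitePlace K).mult
  set g : InfinitePlace K → ℝ := fun w => c w - k * w.mult
  have hg₀ : g w₀ = 0 := by simp [g, k]
  have hg (u : (𝓞 K)ˣ) : ∑ w, g w * Real.log (w u) = 0 := by
    simp only [g, sub_mul, Finset.sum_sub_distrib, mul_assoc, ← Finset.mul_sum, hc,
      sum_mult_mul_log, mul_zero, sub_zero]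
  let f : logSpace K →ₗ[ℝ] ℝ := Fintype.linearCombination ℝ fun w => g w / w.1.mult
  have hf : f = 0 := by
    refine LinearMap.ext_on (unitLattice_span_eq_top K) ?_
    rintro _ ⟨u, -, rfl⟩
    have := hg u.toMul
    rw [Fintype.sum_eq_add_sum_subtype_ne _ w₀, hg₀, zero_mul, zero_add] at this
    rw [LinearMap.zero_apply, ← this, Fintype.linearCombination_apply]
    refine Finset.sum_congr rfl fun w _ => ?_
    change logEmbedding K (Additive.ofMul u.toMul) w • _ = _
    rw [logEmbedding_component, smul_eq_mul]
    field_simp [mult_coe_ne_zero]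
  refine ⟨k, fun w => sub_eq_zero.mp ?_⟩
  by_cases hw : w = w₀
  · exact hw ▸ hg₀
  · have := LinearMap.congr_fun hf (Pi.single ⟨w, hw⟩ 1)
    simpa [f, Fintype.linearCombination_apply_single, mult_coe_ne_zero] using this

end NumberField

namespace IsAlgebraicHeckeCharacter

variable {L} {𝔣 : Ideal (𝓞 L)} {μ : (L →+* ℂ) → ℤ} {χ : idealsCoprimeTo L 𝔣 →* ℂˣ}

theorem prod_zpow_eq_one_of_unit (hχ : IsAlgebraicHeckeCharacter L 𝔣 μ χ) (u : (𝓞 L)ˣ)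
    (hu : (u : 𝓞 L) - 1 ∈ 𝔣)
    (hpos : ∀ σ : L →+* ℂ, ComplexEmbedding.IsReal σ → 0 < (σ (u : L)).re) :
    ∏ σ : L →+* ℂ, σ (u : L) ^ μ σ = 1 := by
  let ξ : Lˣ := Units.map (algebraMap (𝓞 L) L) u
  have hξ : toPrincipalIdeal (𝓞 L) L ξ = 1 := by
    rw [toPrincipalIdeal_eq_iff, Units.val_one, ← spanSingleton_one,
      spanSingleton_eq_spanSingleton]
    exact ⟨u⁻¹, by simp [ξ, Units.smul_def, Algebra.smul_def]⟩
  have hmem : toPrincipalIdeal (𝓞 L) L ξ ∈ idealsCoprimeTo L 𝔣 := hξ ▸ one_mem _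
  have hcong : MulCongruentOne L 𝔣 (ξ : L) := ⟨u, 1, hu, by simp, by simp, by simp [ξ]⟩
  refine (hχ ξ hmem hcong hpos).symm.trans ?_
  rw [← Units.val_one, Units.val_inj, ← map_one χ]
  exact congrArg χ (Subtype.ext hξ)

theorem sum_mul_log_norm_eq_zero (hχ : IsAlgebraicHeckeCharacter L 𝔣 μ χ) (h𝔣 : 𝔣 ≠ 0)
    (u : (𝓞 L)ˣ) : ∑ σ : L →+* ℂ, (μ σ : ℝ) * Real.log ‖σ (u : L)‖ = 0 := by
  have := Ideal.finiteQuotientOfFreeOfNeBot 𝔣 h𝔣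
  obtain ⟨n, hn, hun⟩ := 𝔣.exists_pow_sub_one_mem u
  have hcong : ((u ^ n) ^ 2 : (𝓞 L)ˣ) - (1 : 𝓞 L) ∈ 𝔣 := by
    have hfac : ((u : 𝓞 L) ^ n) ^ 2 - 1 = ((u : 𝓞 L) ^ n - 1) * ((u : 𝓞 L) ^ n + 1) := by ring
    simpa [hfac] using 𝔣.mul_mem_right _ hun
  have hpos (σ : L →+* ℂ) (hσ : ComplexEmbedding.IsReal σ) :
      0 < (σ (((u ^ n) ^ 2 : (𝓞 L)ˣ) : L)).re := by
    simpa using hσ.re_pow_two_pos (pow_ne_zero n (u.isUnit.map (algebraMap (𝓞 L) L)).ne_zero)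
  have hsum := sum_mul_log_norm_eq_zero_of_prod_zpow_eq_one (fun σ => by simp) (hχ.prod_zpow_eq_one_of_unit _ hcong hpos)
  simp only [Units.val_pow_eq_pow_val, map_pow, norm_pow, Real.log_pow] at hsum
  have hscaled : ((2 * n : ℕ) : ℝ) * ∑ σ : L →+* ℂ, (μ σ : ℝ) * Real.log ‖σ (u : L)‖ = 0 := by
    rw [Finset.mul_sum]
    simpa [mul_left_comm, mul_assoc] using hsum
  exact (mul_eq_zero.mp hscaled).resolve_left (by positivity)

open scoped Classical in
theorem exists_sum_fiber_eq_mul_mult (hχ : IsAlgebraicHeckeCharacter L 𝔣 μ χ) (h𝔣 : 𝔣 ≠ 0) :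
    ∃ k : ℝ, ∀ w : InfinitePlace L, ∑ φ with InfinitePlace.mk φ = w, (μ φ : ℝ) = k * w.mult :=
  NumberField.Units.exists_eq_mul_mult_of_sum_mul_log_eq_zero fun u => by
    rw [← InfinitePlace.sum_mul_log_norm_eq_sum_fiber]
    exact hχ.sum_mul_log_norm_eq_zero h𝔣 u

end IsAlgebraicHeckeCharacter

/-- If `L` is totally real, the infinity type of any algebraic Hecke character of `L`
modulo a nonzero ideal `𝔣` is constant. -/
theorem infinityType_constant_of_totallyReal
    (hreal : ∀ σ : L →+* ℂ, ComplexEmbedding.IsReal σ)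
    (𝔣 : Ideal (𝓞 L)) (h𝔣 : 𝔣 ≠ 0)
    (μ : (L →+* ℂ) → ℤ) (χ : idealsCoprimeTo L 𝔣 →* ℂˣ)
    (hχ : IsAlgebraicHeckeCharacter L 𝔣 μ χ) :
    ∃ k : ℤ, ∀ σ : L →+* ℂ, μ σ = k := by
  obtain ⟨k, hk⟩ := hχ.exists_sum_fiber_eq_mul_mult h𝔣
  have hμ (σ : L →+* ℂ) : (μ σ : ℝ) = k := by
    have hσ := hk (InfinitePlace.mk σ)
    rwa [InfinitePlace.filter_mk_eq_singleton_of_isReal (hreal σ), Finset.sum_singleton,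
      (InfinitePlace.isReal_mk_iff.mpr (hreal σ)).mult_eq_one, Nat.cast_one, mul_one] at hσ
  let σ₀ : L →+* ℂ := Classical.arbitrary _
  exact ⟨μ σ₀, fun σ => by exact_mod_cast (hμ σ).trans (hμ σ₀).symm⟩
end

section
/- Let L be a number field and 𝔣 a nonzero ideal of 𝒪_L. Then the quotient group I(𝔣)/P_𝔣 (the ray class group of L modulo 𝔣) is finite. -/
/-
The ideals of `I(𝔣)` that are principal have finite index in `I(𝔣)` because the class group is
finite. A principal ideal `(ξ)` coprime to `𝔣` has a generator `ξ = a / b` with `a, b ∈ 𝒪_L`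
coprime to `𝔣`. The residues of `a` and `b` modulo `𝔣` and the signs of `ξ` at the real places
take finitely many values, and when two generators share these data their quotient generates an
ideal of `P_𝔣`.
-/

open NumberField FractionalIdeal
open scoped nonZeroDivisors

variable (L : Type*) [Field L] [NumberField L]

/-- The subgroup `P_𝔣` of principal fractional ideals `(ξ)` with `ξ ≡ 1 (mod^× 𝔣)` and
`σ(ξ) > 0` for every real embedding `σ` of `L`. -/
noncomputable def rayPrincipal (𝔣 : Ideal (𝓞 L)) :
    Subgroup (FractionalIdeal (𝓞 L)⁰ L)ˣ :=
  Subgroup.closure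
    {I : (FractionalIdeal (𝓞 L)⁰ L)ˣ |
      ∃ ξ : Lˣ, MulCongruentOne L 𝔣 (ξ : L) ∧
        (∀ σ : L →+* ℂ, ComplexEmbedding.IsReal σ → 0 < (σ (ξ : L)).re) ∧
        I = toPrincipalIdeal (𝓞 L) L ξ}

theorem Subgroup.finiteIndex_of_forall_inv_mul_mem {G α : Type*} [Group G] [Finite α]
    (H : Subgroup G) (f : G → α) (hf : ∀ x y, f x = f y → x⁻¹ * y ∈ H) : H.FiniteIndex := by
  have : Finite (G ⧸ H) := Finite.of_injective (fun q ↦ f q.out) fun q q' h ↦ by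
    rw [← QuotientGroup.out_eq' q, ← QuotientGroup.out_eq' q', QuotientGroup.eq]
    exact hf _ _ h
  exact finiteIndex_of_finite_quotient

theorem Ideal.exists_mul_sub_one_mem_of_isCoprime {R : Type*} [CommRing R] [IsDomain R]
    {I : Ideal R} {y : R} (hy : IsCoprime (Ideal.span {y}) I) :
    ∃ e : R, e ≠ 0 ∧ y * e - 1 ∈ I := by
  obtain ⟨i, hi, j, hj, hij⟩ := Ideal.isCoprime_iff_exists.mp hy
  obtain ⟨e, rfl⟩ := Ideal.mem_span_singleton'.mp hi
  by_cases he : e = 0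
  · -- then `1 = j ∈ I`, so `I = ⊤`
    refine ⟨1, one_ne_zero, ?_⟩
    rw [he, zero_mul, zero_add] at hij
    exact (Ideal.eq_top_of_isUnit_mem I hj (hij ▸ isUnit_one)) ▸ Submodule.mem_top
  · exact ⟨e, he, by rw [show y * e - 1 = -j by rw [← hij]; ring]; exact neg_mem hj⟩

theorem Ideal.exists_mem_ne_zero_isCoprime_span_singleton {R : Type*} [CommRing R] [IsDomain R]
    {I J : Ideal R} (hI : I ≠ ⊥) (h : IsCoprime I J) :
    ∃ b ∈ I, b ≠ 0 ∧ IsCoprime (Ideal.span {b}) J := by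
  obtain ⟨b, hb, f, hf, hbf⟩ := Ideal.isCoprime_iff_exists.mp h
  by_cases hb0 : b = 0
  · -- then `1 = f ∈ J`, so `J = ⊤`
    obtain ⟨b', hb', hb'0⟩ := Submodule.exists_mem_ne_zero_of_ne_bot hI
    rw [hb0, zero_add] at hbf
    exact ⟨b', hb', hb'0, Ideal.isCoprime_iff_exists.mpr ⟨0, zero_mem _, 1, hbf ▸ hf, zero_add 1⟩⟩
  · exact ⟨b, hb, hb0,
      Ideal.isCoprime_iff_exists.mpr ⟨b, Ideal.mem_span_singleton_self b, f, hf, hbf⟩⟩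

theorem NumberField.ComplexEmbedding.IsReal.re_inv_mul_pos {K : Type*} [Field K] {σ : K →+* ℂ}
    (hσ : IsReal σ) {x y : K} (hx : x ≠ 0) (hy : y ≠ 0) (h : 0 < (σ x).re ↔ 0 < (σ y).re) :
    0 < (σ (x⁻¹ * y)).re := by
  simp only [← hσ.coe_embedding_apply, Complex.ofReal_re, map_mul, map_inv₀] at h ⊢
  have hx' := (map_ne_zero hσ.embedding).mpr hx
  have hy' := (map_ne_zero hσ.embedding).mpr hy
  rw [mul_pos_iff, inv_pos, inv_lt_zero]
  rcases hx'.lt_or_gt with h₁ | h₁ <;> rcases hy'.lt_or_gt with h₂ | h₂ <;> grind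

instance (K : Type*) [Field K] [NumberField K] : (toPrincipalIdeal (𝓞 K) K).range.FiniteIndex :=
  have := Finite.of_equiv _ (ClassGroup.equiv (R := 𝓞 K) K).toEquiv
  Subgroup.finiteIndex_of_finite_quotient

section RayClassGroup

variable {L} {𝔣 : Ideal (𝓞 L)}

theorem rayPrincipal_le_range : rayPrincipal L 𝔣 ≤ (toPrincipalIdeal (𝓞 L) L).range :=
  (Subgroup.closure_le _).mpr fun _ ⟨ξ, _, _, hξ⟩ ↦ ⟨ξ, hξ.symm⟩

theorem exists_mul_eq_of_mem_idealsCoprimeTo {I : (FractionalIdeal (𝓞 L)⁰ L)ˣ}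
    (hI : I ∈ idealsCoprimeTo L 𝔣) :
    ∃ 𝔞 𝔟 : Ideal (𝓞 L), 𝔞 ≠ 0 ∧ 𝔟 ≠ 0 ∧ IsCoprime 𝔞 𝔣 ∧ IsCoprime 𝔟 𝔣 ∧
      (I : FractionalIdeal (𝓞 L)⁰ L) * 𝔟 = 𝔞 := by
  induction hI using Subgroup.closure_induction with
  | mem I hI =>
    obtain ⟨𝔞, h𝔞, hI⟩ := hI
    refine ⟨𝔞, 1, ?_, one_ne_zero, h𝔞, isCoprime_one_left, ?_⟩
    · rintro rfl
      exact I.ne_zero (hI.trans coeIdeal_bot)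
    · rw [Ideal.one_eq_top, coeIdeal_top, mul_one, hI]
  | one => exact ⟨1, 1, one_ne_zero, one_ne_zero, isCoprime_one_left, isCoprime_one_left, by simp⟩
  | mul I J _ _ hI hJ =>
    obtain ⟨𝔞, 𝔟, h𝔞, h𝔟, c𝔞, c𝔟, hI⟩ := hI
    obtain ⟨𝔞', 𝔟', h𝔞', h𝔟', c𝔞', c𝔟', hJ⟩ := hJ
    refine ⟨𝔞 * 𝔞', 𝔟 * 𝔟', mul_ne_zero h𝔞 h𝔞', mul_ne_zero h𝔟 h𝔟',
      c𝔞.mul_left c𝔞', c𝔟.mul_left c𝔟', ?_⟩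
    rw [coeIdeal_mul, coeIdeal_mul, Units.val_mul, ← hI, ← hJ]
    ring
  | inv I _ hI =>
    obtain ⟨𝔞, 𝔟, h𝔞, h𝔟, c𝔞, c𝔟, hI⟩ := hI
    exact ⟨𝔟, 𝔞, h𝔟, h𝔞, c𝔟, c𝔞, by rw [← hI, Units.inv_mul_cancel_left]⟩

theorem exists_eq_div_of_toPrincipalIdeal_mem {ξ : Lˣ}
    (h : toPrincipalIdeal (𝓞 L) L ξ ∈ idealsCoprimeTo L 𝔣) :
    ∃ a b : 𝓞 L, IsCoprime (Ideal.span {a}) 𝔣 ∧ IsCoprime (Ideal.span {b}) 𝔣 ∧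
      (ξ : L) = algebraMap (𝓞 L) L a / algebraMap (𝓞 L) L b := by
  obtain ⟨𝔞, 𝔟, -, h𝔟, c𝔞, c𝔟, hξ⟩ := exists_mul_eq_of_mem_idealsCoprimeTo h
  rw [coe_toPrincipalIdeal] at hξ
  obtain ⟨b, hb𝔟, hb0, cb⟩ := Ideal.exists_mem_ne_zero_isCoprime_span_singleton h𝔟 c𝔟
  have hbL : algebraMap (𝓞 L) L b ≠ 0 := (map_ne_zero_iff _ (IsFractionRing.injective _ _)).mpr hb0
  obtain ⟨a, -, ha⟩ := (mem_coeIdeal _).mp <| hξ ▸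
    mul_mem_mul (mem_spanSingleton_self _ (ξ : L)) (mem_coeIdeal_of_mem _ hb𝔟)
  have hspan : Ideal.span {a} * 𝔟 = Ideal.span {b} * 𝔞 := by
    refine coeIdeal_injective (K := L) ?_
    beta_reduce
    rw [coeIdeal_mul, coeIdeal_mul, coeIdeal_span_singleton, coeIdeal_span_singleton, ha,
      ← spanSingleton_mul_spanSingleton, mul_right_comm, hξ, mul_comm]
  have ca : IsCoprime (Ideal.span {a} * 𝔟) 𝔣 := hspan ▸ cb.mul_left c𝔞
  exact ⟨a, b, ca.of_mul_left_left, cb, by rw [ha, mul_div_cancel_right₀ _ hbL]⟩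

theorem mulCongruentOne_div {x y : 𝓞 L} (hxy : x - y ∈ 𝔣) (hy : IsCoprime (Ideal.span {y}) 𝔣)
    (hy0 : algebraMap (𝓞 L) L y ≠ 0) :
    MulCongruentOne L 𝔣 (algebraMap (𝓞 L) L x / algebraMap (𝓞 L) L y) := by
  obtain ⟨e, he, hye⟩ := Ideal.exists_mul_sub_one_mem_of_isCoprime hy
  have heL : algebraMap (𝓞 L) L e ≠ 0 := (map_ne_zero_iff _ (IsFractionRing.injective _ _)).mpr he
  refine ⟨x * e, y * e, ?_, hye, by simp [hy0, heL], by simp [mul_div_mul_right _ _ heL]⟩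
  rw [show x * e - 1 = (x - y) * e + (y * e - 1) by ring]
  exact add_mem (Ideal.mul_mem_right _ _ hxy) hye

theorem toPrincipalIdeal_inv_mul_mem_rayPrincipal {ξ η : Lˣ} {a b c d : 𝓞 L}
    (hξ : (ξ : L) = algebraMap (𝓞 L) L a / algebraMap (𝓞 L) L b)
    (hη : (η : L) = algebraMap (𝓞 L) L c / algebraMap (𝓞 L) L d)
    (ha : IsCoprime (Ideal.span {a}) 𝔣) (hd : IsCoprime (Ideal.span {d}) 𝔣)
    (hac : a - c ∈ 𝔣) (hbd : b - d ∈ 𝔣)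
    (hsign : ∀ σ : L →+* ℂ, ComplexEmbedding.IsReal σ → (0 < (σ ξ).re ↔ 0 < (σ η).re)) :
    toPrincipalIdeal (𝓞 L) L (ξ⁻¹ * η) ∈ rayPrincipal L 𝔣 := by
  have haL : algebraMap (𝓞 L) L a ≠ 0 := fun h ↦ ξ.ne_zero (by rw [hξ, h, zero_div])
  have hdL : algebraMap (𝓞 L) L d ≠ 0 := fun h ↦ η.ne_zero (by rw [hη, h, _root_.div_zero])
  have hcong : MulCongruentOne L 𝔣 ((ξ⁻¹ * η : Lˣ) : L) := by
    have hquot : ((ξ⁻¹ * η : Lˣ) : L) =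
        algebraMap (𝓞 L) L (b * c) / algebraMap (𝓞 L) L (a * d) := by
      rw [Units.val_mul, Units.val_inv_eq_inv_val, hξ, hη, map_mul, map_mul]
      field_simp
    rw [hquot]
    refine mulCongruentOne_div ?_ ?_ (by simp [haL, hdL])
    · rw [show b * c - a * d = b * (c - a) + a * (b - d) by ring, ← neg_sub a c]
      exact add_mem (Ideal.mul_mem_left _ _ (neg_mem hac)) (Ideal.mul_mem_left _ _ hbd)
    · rw [← Ideal.span_singleton_mul_span_singleton]
      exact ha.mul_left hd
  refine Subgroup.subset_closure ⟨ξ⁻¹ * η, hcong, fun σ hσ ↦ ?_, rfl⟩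
  rw [Units.val_mul, Units.val_inv_eq_inv_val]
  exact hσ.re_inv_mul_pos ξ.ne_zero η.ne_zero (hsign σ hσ)

theorem rayPrincipal_subgroupOf_principal_finiteIndex (h𝔣 : 𝔣 ≠ 0) :
    ((rayPrincipal L 𝔣).subgroupOf
      ((toPrincipalIdeal (𝓞 L) L).range ⊓ idealsCoprimeTo L 𝔣)).FiniteIndex := by
  have : Finite (𝓞 L ⧸ 𝔣) := Ideal.finiteQuotientOfFreeOfNeBot 𝔣 h𝔣
  have hrep (I : ↥((toPrincipalIdeal (𝓞 L) L).range ⊓ idealsCoprimeTo L 𝔣)) :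
      ∃ ξ : Lˣ, ∃ a b : 𝓞 L, toPrincipalIdeal (𝓞 L) L ξ = I ∧ IsCoprime (Ideal.span {a}) 𝔣 ∧
        IsCoprime (Ideal.span {b}) 𝔣 ∧ (ξ : L) = algebraMap (𝓞 L) L a / algebraMap (𝓞 L) L b := by
    obtain ⟨⟨ξ, hξ⟩, hI⟩ := I.2
    obtain ⟨a, b, ha, hb, h⟩ := exists_eq_div_of_toPrincipalIdeal_mem (hξ ▸ hI)
    exact ⟨ξ, a, b, hξ, ha, hb, h⟩
  choose ξ a b hξ ha hb hab using hrep
  -- `ξ I` is determined modulo `P_𝔣` by the residues of `a I`, `b I` and the signs of `ξ I`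
  refine Subgroup.finiteIndex_of_forall_inv_mul_mem _ (fun I ↦ (Ideal.Quotient.mk 𝔣 (a I),
    Ideal.Quotient.mk 𝔣 (b I), fun σ : {σ : L →+* ℂ // ComplexEmbedding.IsReal σ} ↦
      0 < (σ.1 (ξ I)).re)) fun I J hIJ ↦ ?_
  simp only [Prod.mk.injEq, funext_iff, eq_iff_iff, Ideal.Quotient.eq] at hIJ
  obtain ⟨hac, hbd, hsign⟩ := hIJ
  rw [Subgroup.mem_subgroupOf, Subgroup.coe_mul, Subgroup.coe_inv, ← hξ, ← hξ, ← map_inv,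
    ← map_mul]
  exact toPrincipalIdeal_inv_mul_mem_rayPrincipal (hab I) (hab J) (ha I) (hb J) hac hbd
    fun σ hσ ↦ hsign ⟨σ, hσ⟩

end RayClassGroup

/-- The ray class group `I(𝔣)/P_𝔣` of a number field `L` modulo a nonzero ideal `𝔣`
is finite. -/
theorem rayClassGroup_finite (𝔣 : Ideal (𝓞 L)) (h𝔣 : 𝔣 ≠ 0) :
    Finite (idealsCoprimeTo L 𝔣 ⧸ (rayPrincipal L 𝔣).subgroupOf (idealsCoprimeTo L 𝔣)) := by
  have hindex := Subgroup.relIndex_inf_mul_relIndex (rayPrincipal L 𝔣)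
    (toPrincipalIdeal (𝓞 L) L).range (idealsCoprimeTo L 𝔣)
  rw [inf_eq_left.mpr rayPrincipal_le_range] at hindex
  have : (rayPrincipal L 𝔣).IsFiniteRelIndex (idealsCoprimeTo L 𝔣) :=
    ⟨hindex ▸ mul_ne_zero (rayPrincipal_subgroupOf_principal_finiteIndex h𝔣).index_ne_zero
      (Subgroup.isFiniteRelIndex_of_finiteIndex).relIndex_ne_zero⟩
  infer_instance
end

section
/- Let p be a prime. For each integer n ≥ 0 let c_n : ℤ_p → ℤ_p be the continuous function c_n(x) = x(x−1)⋯(x−n+1)/n! (the n-th binomial coefficient function, which takes values in ℤ_p). Then the ℤ_p-linear map from Meas(ℤ_p, ℤ_p) := Hom_{ℤ_p}(C(ℤ_p, ℤ_p), ℤ_p) to the formal power series ring ℤ_p[[T]] sending a measure μ to Σ_{n≥0} μ(c_n)·T^n is bijective, i.e., an isomorphism of ℤ_p-modules. -/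
open scoped Nat

/-- The coefficient map on `p`-adic measures, `μ ↦ ∑_{n ≥ 0} μ(c_n)·Tⁿ`, where
`c : ℕ → C(ℤ_p, ℤ_p)` is intended to be the sequence of binomial coefficient
functions (the Mahler basis). -/
noncomputable def measureToPowerSeries (p : ℕ) [Fact p.Prime]
    (c : ℕ → C(ℤ_[p], ℤ_[p])) :
    (C(ℤ_[p], ℤ_[p]) →ₗ[ℤ_[p]] ℤ_[p]) →ₗ[ℤ_[p]] PowerSeries ℤ_[p] where
  toFun μ := PowerSeries.mk fun n => μ (c n)
  map_add' μ ν := by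
    ext n
    simp [PowerSeries.coeff_mk]
  map_smul' r μ := by
    ext n
    simp [PowerSeries.coeff_mk]

open Finset Filter
open scoped Topology fwdDiff

/-!
Every `ℤ_p`-linear functional `μ` on `C(ℤ_p, ℤ_p)` is automatically continuous, of norm at most `1`:
a function of sup-norm `p⁻ᵏ` is `pᵏ` times a function in `C(ℤ_p, ℤ_p)`, so `μ` of it is divisible
by `pᵏ`. By Mahler's theorem `f = ∑ Δⁿf(0) c_n` uniformly, hence `μ f = ∑ Δⁿf(0) μ(c_n)`, and `μ`
is determined by its coefficients `μ(c_n)`. Conversely, since `Δⁿf(0) → 0`, any sequence `b` gives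
the functional `f ↦ ∑ Δⁿf(0) b_n`, which sends `c_n` to `b_n` because `Δᵐc_n(0) = δ_{mn}`.
-/

namespace PadicInt

variable {p : ℕ} [Fact p.Prime]

lemma coe_mahler_apply (n : ℕ) (x : ℤ_[p]) :
    ((mahler n x : ℤ_[p]) : ℚ_[p]) = (∏ i ∈ range n, ((x : ℚ_[p]) - i)) / n ! := by
  have h : ((Ring.choose x n : ℤ_[p]) : ℚ_[p]) = Ring.choose (x : ℚ_[p]) n :=
    Ring.map_choose (Coe.ringHom : ℤ_[p] →+* ℚ_[p]) x n
  rw [mahler_apply, h, Ring.choose_eq_smul, ← Polynomial.aeval_eq_smeval,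
    ← descPochhammer_eval_eq_prod_range, Polynomial.aeval_def, Polynomial.eval₂_eq_eval_map, descPochhammer_map, smul_eq_mul,
    div_eq_inv_mul]

lemma exists_eq_p_pow_smul_of_norm_le {X : Type*} [TopologicalSpace X] (f : C(X, ℤ_[p])) {k : ℕ}
    (hf : ∀ x, ‖f x‖ ≤ (p : ℝ) ^ (-k : ℤ)) : ∃ g : C(X, ℤ_[p]), f = (p : ℤ_[p]) ^ k • g := by
  have hpk : (p : ℚ_[p]) ^ k ≠ 0 :=
    pow_ne_zero k (Nat.cast_ne_zero.mpr (Fact.out : p.Prime).ne_zero)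
  have hquot (x : X) : ‖(f x : ℚ_[p]) / (p : ℚ_[p]) ^ k‖ ≤ 1 := by
    rw [norm_div, norm_pow, Padic.norm_p, inv_pow, ← zpow_natCast, ← zpow_neg,
      div_le_one (zpow_pos (mod_cast (Fact.out : p.Prime).pos) _)]
    exact hf x
  refine ⟨⟨fun x => ⟨(f x : ℚ_[p]) / (p : ℚ_[p]) ^ k, hquot x⟩,
    ((continuous_subtype_val.comp f.continuous).div_const _).subtype_mk hquot⟩, ?_⟩
  ext x
  apply PadicInt.ext
  change (f x : ℚ_[p]) = (p : ℚ_[p]) ^ k * ((f x : ℚ_[p]) / (p : ℚ_[p]) ^ k)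
  rw [mul_div_cancel₀ _ hpk]

lemma norm_linearMap_apply_le {X : Type*} [TopologicalSpace X] [CompactSpace X]
    (μ : C(X, ℤ_[p]) →ₗ[ℤ_[p]] ℤ_[p]) (f : C(X, ℤ_[p])) : ‖μ f‖ ≤ ‖f‖ := by
  rcases eq_or_ne f 0 with rfl | hf
  · simp
  obtain ⟨y, hy⟩ : ∃ y, f y ≠ 0 := by
    by_contra! h
    exact hf (ContinuousMap.ext h)
  obtain ⟨x₀, -, hx₀⟩ := isCompact_univ.exists_isMaxOn ⟨y, trivial⟩
    (continuous_norm.comp f.continuous).continuousOn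
  have hfx₀ : f x₀ ≠ 0 := norm_pos_iff.mp ((norm_pos_iff.mpr hy).trans_le (hx₀ (Set.mem_univ y)))
  set v := (f x₀).valuation
  obtain ⟨g, hg⟩ := exists_eq_p_pow_smul_of_norm_le f (k := v)
    fun x => (hx₀ (Set.mem_univ x)).trans_eq (norm_eq_zpow_neg_valuation hfx₀)
  calc ‖μ f‖
      = (p : ℝ) ^ (-v : ℤ) * ‖μ g‖ := by rw [hg, map_smul, smul_eq_mul, norm_mul, norm_p_pow]
    _ ≤ (p : ℝ) ^ (-v : ℤ) := mul_le_of_le_one_right (by positivity) (norm_le_one _)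
    _ = ‖f x₀‖ := (norm_eq_zpow_neg_valuation hfx₀).symm
    _ ≤ _ := ContinuousMap.norm_coe_le_norm _ x₀

lemma hasSum_linearMap_apply_mahler (μ : C(ℤ_[p], ℤ_[p]) →ₗ[ℤ_[p]] ℤ_[p]) (f : C(ℤ_[p], ℤ_[p])) :
    HasSum (fun n => Δ_[1] ^[n] f 0 * μ (mahler n)) (μ f) := by
  have hμ : Continuous μ := (μ.mkContinuous 1 fun g => by
    simpa using norm_linearMap_apply_le μ g).continuous
  convert (hasSum_mahler f).map μ hμ using 1
  ext n
  have : (mahlerTerm (Δ_[1] ^[n] f 0) n : C(ℤ_[p], ℤ_[p])) = Δ_[1] ^[n] f 0 • mahler n := by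
    ext x
    simp [mahlerTerm_apply, mul_comm]
  simp [this]

lemma linearMap_ext_mahler {μ ν : C(ℤ_[p], ℤ_[p]) →ₗ[ℤ_[p]] ℤ_[p]}
    (h : ∀ n, μ (mahler n) = ν (mahler n)) : μ = ν :=
  LinearMap.ext fun f => (hasSum_linearMap_apply_mahler μ f).unique <| by
    simpa only [h] using hasSum_linearMap_apply_mahler ν f

lemma fwdDiff_iter_mahler_zero (n m : ℕ) :
    Δ_[1] ^[m] (mahler n) (0 : ℤ_[p]) = (Pi.single n 1 : ℕ → ℤ_[p]) m := by
  have hsingle : Tendsto (Pi.single n 1 : ℕ → ℤ_[p]) atTop (𝓝 0) :=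
    tendsto_const_nhds.congr' <| (eventually_gt_atTop n).mono fun m hm => by
      simp [hm.ne']
  have : (mahler n : C(ℤ_[p], ℤ_[p])) = mahlerSeries (Pi.single n 1) := by
    rw [mahlerSeries, tsum_eq_single n fun m hm => by simp [hm, mahlerTerm], Pi.single_eq_same,
      mahlerTerm_one]
  rw [this, fwdDiff_mahlerSeries hsingle]

lemma summable_fwdDiff_iter_mul (f : C(ℤ_[p], ℤ_[p])) (b : ℕ → ℤ_[p]) :
    Summable fun n => Δ_[1] ^[n] f 0 * b n := by
  apply NonarchimedeanAddGroup.summable_of_tendsto_cofinite_zero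
  rw [Nat.cofinite_eq_atTop]
  have h := fwdDiff_tendsto_zero f
  rw [tendsto_zero_iff_norm_tendsto_zero] at h ⊢
  refine squeeze_zero (fun n => norm_nonneg _) (fun n => ?_) h
  rw [norm_mul]
  exact mul_le_of_le_one_right (norm_nonneg _) (norm_le_one _)

noncomputable def measureOfMahlerCoeffs (b : ℕ → ℤ_[p]) : C(ℤ_[p], ℤ_[p]) →ₗ[ℤ_[p]] ℤ_[p] where
  toFun f := ∑' n, Δ_[1] ^[n] f 0 * b n
  map_add' f g := by
    simp only [ContinuousMap.coe_add, fwdDiff_iter_add, Pi.add_apply, add_mul]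
    exact (summable_fwdDiff_iter_mul f b).tsum_add (summable_fwdDiff_iter_mul g b)
  map_smul' r f := by
    simp only [ContinuousMap.coe_smul, fwdDiff_iter_const_smul, Pi.smul_apply, smul_eq_mul,
      RingHom.id_apply, mul_assoc]
    exact (summable_fwdDiff_iter_mul f b).tsum_mul_left r

lemma measureOfMahlerCoeffs_mahler (b : ℕ → ℤ_[p]) (n : ℕ) :
    measureOfMahlerCoeffs b (mahler n) = b n := by
  simp [measureOfMahlerCoeffs, fwdDiff_iter_mahler_zero, Pi.single_apply]

end PadicInt

/-- Mahler's theorem for measures: if `c n : ℤ_p → ℤ_p` is the `n`-th binomial coefficient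
function `x ↦ x(x−1)⋯(x−n+1)/n!`, then the `ℤ_p`-linear map
`Meas(ℤ_p, ℤ_p) = Hom_{ℤ_p}(C(ℤ_p, ℤ_p), ℤ_p) → ℤ_p[[T]]`, `μ ↦ ∑_{n≥0} μ(c_n)·Tⁿ`,
is bijective, i.e. an isomorphism of `ℤ_p`-modules. -/
theorem measureToPowerSeries_bijective (p : ℕ) [Fact p.Prime]
    (c : ℕ → C(ℤ_[p], ℤ_[p]))
    (hc : ∀ (n : ℕ) (x : ℤ_[p]),
      ((c n x : ℤ_[p]) : ℚ_[p]) =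
        (∏ i ∈ Finset.range n, ((x : ℚ_[p]) - (i : ℚ_[p]))) / (n ! : ℚ_[p])) :
    Function.Bijective (measureToPowerSeries p c) := by
  obtain rfl : c = mahler := funext fun n => ContinuousMap.ext fun x => PadicInt.ext <| by
    rw [hc, PadicInt.coe_mahler_apply]
  refine ⟨fun μ ν hμν => PadicInt.linearMap_ext_mahler fun n => ?_,
    fun F => ⟨PadicInt.measureOfMahlerCoeffs (PowerSeries.coeff · F), ?_⟩⟩
  · simpa [measureToPowerSeries] using congrArg (PowerSeries.coeff n) hμν
  · ext n
    simp [measureToPowerSeries, PadicInt.measureOfMahlerCoeffs_mahler]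
end
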